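/- (Theorem 3.1, (iii) ⇒ (iv)) Assume (iii): there exists C3 > 0 such that for all ε > 0, all t > 0 and all u0 ∈ L²(Ω), ‖S(t)u0‖² ≤ e^{C3(1 + (1/t)^{σ/(1−σ)})} e^{((C3/t) ln(e + 1/ε))^σ} ‖S(t)u0‖_ω² + ε ‖u0‖². Then (iv) holds: there exists C4 > 0 such that for all t > 0 and all u0 ∈ L²(Ω) with u0 ≠ 0, ‖S(t)u0‖ ≤ e^{C4(1 + (1/t)^{σ/(1−σ)})} e^{((C4/t) ln( ‖u0‖ / ‖S(t)u0‖ ))^σ} ‖S(t)u0‖_ω. -/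

import Mathlib

/-!
Choose `ε = ‖S(t)u0‖² / (2‖u0‖²)` in (iii): half of `‖S(t)u0‖²` is absorbed by the `ε`-term, and
`ln (e + 1/ε) ≤ 2 + 2 ln (‖u0‖ / ‖S(t)u0‖)` because `S(t)` is a contraction. Subadditivity of
`x ↦ x^σ` then splits the cost into a part bounded by a multiple of `1 + (1/t)^(σ/(1-σ))`
(as `σ ≤ σ/(1-σ)`) and a part of the form of (iv).
-/

open MeasureTheory Set Filter
open scoped RealInnerProductSpace

noncomputable section

/-- The heat semigroup `S(t)u0 = sum_j e^{-lam_j t} <u0, Phi_j> Phi_j` on `L2(Omega)`,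
given a Hilbert basis `B` of eigenfunctions and eigenvalues `lam`. -/
noncomputable def heatSG {d : ℕ} {Ω : Set (EuclideanSpace ℝ (Fin d))}
    (B : HilbertBasis ℕ ℝ (Lp ℝ 2 (volume.restrict Ω))) (lam : ℕ → ℝ)
    (t : ℝ) (u : Lp ℝ 2 (volume.restrict Ω)) : Lp ℝ 2 (volume.restrict Ω) :=
  ∑' j, (Real.exp (-(lam j) * t) * ⟪u, B j⟫) • B j

/-- Multiplication by the indicator function `1_omega` on `L2(Omega)`. -/
noncomputable def indLp {d : ℕ} {Ω : Set (EuclideanSpace ℝ (Fin d))}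
    (ω : Set (EuclideanSpace ℝ (Fin d))) (hω : MeasurableSet ω)
    (f : Lp ℝ 2 (volume.restrict Ω)) : Lp ℝ 2 (volume.restrict Ω) :=
  MemLp.toLp (ω.indicator ⇑f) ((Lp.memLp f).indicator hω)

open Real

theorem HilbertBasis.norm_tsum_mul_inner_smul_le {ι E : Type*} [NormedAddCommGroup E]
    [InnerProductSpace ℝ E] (b : HilbertBasis ι ℝ E) (g : ι → ℝ) (hg : ∀ i, |g i| ≤ 1) (u : E) :
    ‖∑' i, (g i * ⟪u, b i⟫) • b i‖ ≤ ‖u‖ := by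
  have hle : ∀ i, ‖g i * b.repr u i‖ ≤ ‖b.repr u i‖ := fun i => by
    rw [norm_mul, Real.norm_eq_abs]
    exact mul_le_of_le_one_left (norm_nonneg _) (hg i)
  let v : lp (fun _ : ι => ℝ) 2 := ⟨_, (b.repr u).2.mono' hle⟩
  have hv : ∑' i, (g i * ⟪u, b i⟫) • b i = b.repr.symm v := by
    rw [← (b.hasSum_repr_symm v).tsum_eq]
    simp [v, b.repr_apply_apply, real_inner_comm]
  rw [hv, LinearIsometryEquiv.norm_map, ← b.repr.norm_map u]
  exact lp.norm_mono two_ne_zero hle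

theorem norm_heatSG_le {d : ℕ} {Ω : Set (EuclideanSpace ℝ (Fin d))}
    (B : HilbertBasis ℕ ℝ (Lp ℝ 2 (volume.restrict Ω))) {lam : ℕ → ℝ} (hlam : ∀ j, 0 ≤ lam j)
    {t : ℝ} (ht : 0 ≤ t) (u : Lp ℝ 2 (volume.restrict Ω)) : ‖heatSG B lam t u‖ ≤ ‖u‖ :=
  B.norm_tsum_mul_inner_smul_le _ (fun j => by
    rw [abs_of_pos (exp_pos _), exp_le_one_iff, neg_mul, neg_nonpos]
    exact mul_nonneg (hlam j) ht) u

theorem rpow_le_one_add_rpow {x p q : ℝ} (hx : 0 ≤ x) (hp : 0 ≤ p) (hpq : p ≤ q) :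
    x ^ p ≤ 1 + x ^ q := by
  rcases le_or_gt x 1 with hx1 | hx1
  · linarith [rpow_le_one hx hx1 hp, rpow_nonneg hx q]
  · linarith [rpow_le_rpow_of_exponent_le hx1.le hpq]

theorem log_exp_one_add_two_mul_sq_le {r : ℝ} (hr : 1 ≤ r) :
    log (exp 1 + 2 * r ^ 2) ≤ 2 + 2 * log r := by
  have he : 2 ≤ exp 1 := by linarith [add_one_le_exp 1]
  have hr2 : 1 ≤ r ^ 2 := one_le_pow₀ hr
  calc log (exp 1 + 2 * r ^ 2) ≤ log ((exp 1 * r) ^ 2) :=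
        log_le_log (by positivity)
          (by nlinarith [mul_le_mul he hr2 zero_le_one (by positivity)])
    _ = 2 + 2 * log r := by
        rw [log_pow, log_mul (exp_pos 1).ne' (by positivity), log_exp]
        push_cast
        ring

/-- The cost in (iii), with `x = ln (e + 1/ε)`, and in (iv), with `x = ln (‖u0‖ / ‖S(t)u0‖)`. -/
def obsCost (σ C t x : ℝ) : ℝ :=
  exp (C * (1 + (1 / t) ^ (σ / (1 - σ)))) * exp ((C / t * x) ^ σ)

theorem one_le_obsCost {σ C t x : ℝ} (hC : 0 ≤ C) (ht : 0 ≤ t) (hx : 0 ≤ x) :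
    1 ≤ obsCost σ C t x :=
  one_le_mul_of_one_le_of_one_le
    (one_le_exp (mul_nonneg hC (by positivity)))
    (one_le_exp (rpow_nonneg (by positivity) σ))

theorem two_mul_obsCost_log_le {σ C t r : ℝ} (hσ0 : 0 ≤ σ) (hσ1 : σ < 1) (hC : 0 ≤ C)
    (ht : 0 < t) (hr : 1 ≤ r) :
    2 * obsCost σ C t (log (exp 1 + 2 * r ^ 2)) ≤ obsCost σ (3 * C + 2) t (log r) := by
  set T := (1 / t) ^ (σ / (1 - σ))
  have hT : 0 ≤ T := by positivity
  have hlogr : 0 ≤ log r := log_nonneg hr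
  have hσσ : σ ≤ σ / (1 - σ) := by
    rw [le_div_iff₀ (by linarith)]
    nlinarith
  have hsplit : (C / t * log (exp 1 + 2 * r ^ 2)) ^ σ ≤
      (1 + 2 * C) * (1 + T) + (2 * C / t * log r) ^ σ :=
    calc (C / t * log (exp 1 + 2 * r ^ 2)) ^ σ
        ≤ (2 * C * (1 / t) + 2 * C / t * log r) ^ σ := by
          refine rpow_le_rpow (mul_nonneg (by positivity) (log_nonneg ?_)) ?_ hσ0
          · nlinarith [add_one_le_exp 1]
          · calc C / t * log (exp 1 + 2 * r ^ 2) ≤ C / t * (2 + 2 * log r) :=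
                  mul_le_mul_of_nonneg_left (log_exp_one_add_two_mul_sq_le hr) (by positivity)
              _ = 2 * C * (1 / t) + 2 * C / t * log r := by ring
      _ ≤ (2 * C * (1 / t)) ^ σ + (2 * C / t * log r) ^ σ :=
          rpow_add_le_add_rpow (by positivity) (by positivity) hσ0 hσ1.le
      _ ≤ (1 + 2 * C) * (1 + T) + (2 * C / t * log r) ^ σ := by
          rw [mul_rpow (by positivity) (by positivity)]
          gcongr
          · simpa using rpow_le_one_add_rpow (by positivity : 0 ≤ 2 * C) hσ0 hσ1.le
          · exact rpow_le_one_add_rpow (by positivity) hσ0 hσσ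
  have hlog : (2 * C / t * log r) ^ σ ≤ ((3 * C + 2) / t * log r) ^ σ := by
    gcongr
    linarith
  have htwo : (2 : ℝ) ≤ exp (1 + T) := by linarith [add_one_le_exp (1 + T)]
  unfold obsCost
  calc 2 * (exp (C * (1 + T)) * exp ((C / t * log (exp 1 + 2 * r ^ 2)) ^ σ))
      ≤ exp (1 + T) * (exp (C * (1 + T)) * exp ((C / t * log (exp 1 + 2 * r ^ 2)) ^ σ)) := by
        gcongr
    _ = exp ((1 + T) + C * (1 + T) + (C / t * log (exp 1 + 2 * r ^ 2)) ^ σ) := by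
        rw [exp_add (1 + T + _), exp_add (1 + T)]
        ring
    _ ≤ exp ((3 * C + 2) * (1 + T) + ((3 * C + 2) / t * log r) ^ σ) := by
        refine exp_le_exp.2 ?_
        have hcoeff : (3 * C + 2) * (1 + T) = (1 + T) + C * (1 + T) + (1 + 2 * C) * (1 + T) := by
          ring
        linarith
    _ = _ := exp_add _ _

theorem le_obsCost_log_mul_of_forall_eps {σ C t N U W : ℝ} (hσ0 : 0 ≤ σ) (hσ1 : σ < 1)
    (hC : 0 ≤ C) (ht : 0 < t) (hN : 0 < N) (hNU : N ≤ U) (hW : 0 ≤ W)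
    (h : ∀ ε > 0, N ^ 2 ≤ obsCost σ C t (log (exp 1 + 1 / ε)) * W ^ 2 + ε * U ^ 2) :
    N ≤ obsCost σ (3 * C + 2) t (log (U / N)) * W := by
  set D := obsCost σ (3 * C + 2) t (log (U / N))
  have hU : 0 < U := hN.trans_le hNU
  have hr : 1 ≤ U / N := (one_le_div hN).2 hNU
  have hsq : N ^ 2 ≤ 2 * obsCost σ C t (log (exp 1 + 2 * (U / N) ^ 2)) * W ^ 2 := by
    have hε := h (N ^ 2 / (2 * U ^ 2)) (by positivity)
    rw [show 1 / (N ^ 2 / (2 * U ^ 2)) = 2 * (U / N) ^ 2 by field_simp,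
      show N ^ 2 / (2 * U ^ 2) * U ^ 2 = N ^ 2 / 2 by field_simp] at hε
    linarith
  have hD : 1 ≤ D := one_le_obsCost (by positivity) ht.le (log_nonneg hr)
  have hDsq : N ^ 2 ≤ (D * W) ^ 2 :=
    calc N ^ 2 ≤ D * W ^ 2 := hsq.trans (by gcongr; exact two_mul_obsCost_log_le hσ0 hσ1 hC ht hr)
      _ ≤ (D * W) ^ 2 := by nlinarith [sq_nonneg W]
  exact (pow_le_pow_iff_left₀ hN.le (by positivity) two_ne_zero).1 hDsq

theorem observation_with_eps_implies_log_observation_general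
    (d : ℕ) (Ω ω : Set (EuclideanSpace ℝ (Fin d)))
    (hωm : MeasurableSet ω)
    (B : HilbertBasis ℕ ℝ (Lp ℝ 2 (volume.restrict Ω)))
    (lam : ℕ → ℝ) (hpos : ∀ j, 0 < lam j)
    (σ : ℝ) (hσ : σ ∈ Ioo (0:ℝ) 1)
    -- (iii)
    (hiii : ∃ C3 > 0, ∀ ε > 0, ∀ t > 0, ∀ u0 : Lp ℝ 2 (volume.restrict Ω),
      ‖heatSG B lam t u0‖ ^ 2 ≤
        Real.exp (C3 * (1 + (1 / t) ^ (σ / (1 - σ)))) *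
          Real.exp ((C3 / t * Real.log (Real.exp 1 + 1 / ε)) ^ σ) *
            ‖indLp ω hωm (heatSG B lam t u0)‖ ^ 2
        + ε * ‖u0‖ ^ 2) :
    -- (iv)
    ∃ C4 > 0, ∀ t > 0, ∀ u0 : Lp ℝ 2 (volume.restrict Ω), u0 ≠ 0 →
      ‖heatSG B lam t u0‖ ≤
        Real.exp (C4 * (1 + (1 / t) ^ (σ / (1 - σ)))) *
          Real.exp ((C4 / t * Real.log (‖u0‖ / ‖heatSG B lam t u0‖)) ^ σ) *
            ‖indLp ω hωm (heatSG B lam t u0)‖ := by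
  obtain ⟨C3, hC3, H⟩ := hiii
  refine ⟨3 * C3 + 2, by positivity, fun t ht u0 _ => ?_⟩
  rcases (norm_nonneg (heatSG B lam t u0)).eq_or_lt with hN0 | hN
  · rw [← hN0]
    positivity
  exact le_obsCost_log_mul_of_forall_eps hσ.1.le hσ.2 hC3.le ht hN
    (norm_heatSG_le B (fun j => (hpos j).le) ht.le u0) (norm_nonneg _)
    (fun ε hε => H ε hε t ht u0)

/-- Theorem 3.1, (iii) ⇒ (iv). -/
theorem observation_with_eps_implies_log_observation
    (d : ℕ) (hd : 1 ≤ d) (Ω ω : Set (EuclideanSpace ℝ (Fin d)))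
    (hΩo : IsOpen Ω) (hΩb : Bornology.IsBounded Ω) (hΩc : IsConnected Ω)
    (hωo : IsOpen ω) (hωne : ω.Nonempty) (hωΩ : ω ⊆ Ω) (hωm : MeasurableSet ω)
    (B : HilbertBasis ℕ ℝ (Lp ℝ 2 (volume.restrict Ω)))
    (lam : ℕ → ℝ) (hpos : ∀ j, 0 < lam j) (hmono : Monotone lam)
    (hlim : Tendsto lam atTop atTop)
    (σ : ℝ) (hσ : σ ∈ Ioo (0:ℝ) 1)
    -- (iii)
    (hiii : ∃ C3 > 0, ∀ ε > 0, ∀ t > 0, ∀ u0 : Lp ℝ 2 (volume.restrict Ω),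
      ‖heatSG B lam t u0‖ ^ 2 ≤
        Real.exp (C3 * (1 + (1 / t) ^ (σ / (1 - σ)))) *
          Real.exp ((C3 / t * Real.log (Real.exp 1 + 1 / ε)) ^ σ) *
            ‖indLp ω hωm (heatSG B lam t u0)‖ ^ 2
        + ε * ‖u0‖ ^ 2) :
    -- (iv)
    ∃ C4 > 0, ∀ t > 0, ∀ u0 : Lp ℝ 2 (volume.restrict Ω), u0 ≠ 0 →
      ‖heatSG B lam t u0‖ ≤
        Real.exp (C4 * (1 + (1 / t) ^ (σ / (1 - σ)))) *
          Real.exp ((C4 / t * Real.log (‖u0‖ / ‖heatSG B lam t u0‖)) ^ σ) *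
            ‖indLp ω hωm (heatSG B lam t u0)‖ :=
  observation_with_eps_implies_log_observation_general d Ω ω hωm B lam hpos σ hσ hiii
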